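/- If a graph G has NLC-width at most k, then its edge complement graph also has NLC-width at most k. -/

import Mathlib

open SimpleGraph

/-- Edge insertion `η_{a,b}`: add all edges between vertices labeled `a` and `b`. -/
def etaG {V : Type} {k : ℕ} (G : SimpleGraph V) (lab : V → Fin k) (a b : Fin k) :
    SimpleGraph V where
  Adj x y := G.Adj x y ∨ (x ≠ y ∧ ((lab x = a ∧ lab y = b) ∨ (lab x = b ∧ lab y = a)))
  symm := by
    constructor
    intro x y h
    rcases h with h | ⟨hxy, h⟩
    · exact Or.inl h.symm
    · rcases h with ⟨h1,h2⟩|⟨h1,h2⟩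
      · exact Or.inr ⟨hxy.symm, Or.inr ⟨h2,h1⟩⟩
      · exact Or.inr ⟨hxy.symm, Or.inl ⟨h2,h1⟩⟩
  loopless := by
    constructor
    intro x h
    rcases h with h | ⟨hxx, _⟩
    · exact G.loopless.irrefl x h
    · exact hxx rfl

/-- NLC-width union operation `×_S`. -/
def nlcJoin {V W : Type} {k : ℕ} (G : SimpleGraph V) (H : SimpleGraph W)
    (labG : V → Fin k) (labH : W → Fin k) (S : Set (Fin k × Fin k)) :
    SimpleGraph (V ⊕ W) where
  Adj x y := match x, y with
    | .inl a, .inl b => G.Adj a b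
    | .inr a, .inr b => H.Adj a b
    | .inl a, .inr b => (labG a, labH b) ∈ S
    | .inr a, .inl b => (labG b, labH a) ∈ S
  symm := by
    constructor
    rintro (a | a) (b | b) h
    · exact G.adj_symm h
    · exact h
    · exact h
    · exact H.adj_symm h
  loopless := by
    constructor
    rintro (a | a) h
    · exact G.loopless.irrefl a h
    · exact H.loopless.irrefl a h

/-- Labeled graphs constructible by clique-width operations with labels in `Fin k`. -/
inductive CWBuild (k : ℕ) : {V : Type} → SimpleGraph V → (V → Fin k) → Prop
  | single (a : Fin k) : CWBuild k (⊥ : SimpleGraph PUnit) (fun _ => a)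
  | union {V W : Type} {G : SimpleGraph V} {H : SimpleGraph W}
      {labG : V → Fin k} {labH : W → Fin k} :
      CWBuild k G labG → CWBuild k H labH →
      CWBuild k (G ⊕g H) (Sum.elim labG labH)
  | insertEdges {V : Type} {G : SimpleGraph V} {lab : V → Fin k} (a b : Fin k)
      (hab : a ≠ b) : CWBuild k G lab → CWBuild k (etaG G lab a b) lab
  | relabel {V : Type} {G : SimpleGraph V} {lab : V → Fin k} (a b : Fin k) :
      CWBuild k G lab → CWBuild k G (fun v => if lab v = a then b else lab v)

/-- `G` is definable by a clique-width `k`-expression. -/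
def HasCW (k : ℕ) {V : Type} (G : SimpleGraph V) : Prop :=
  ∃ (W : Type) (H : SimpleGraph W) (lab : W → Fin k),
    CWBuild k H lab ∧ Nonempty (G ≃g H)

/-- The clique-width of `G`. -/
noncomputable def cliquewidth {V : Type} (G : SimpleGraph V) : ℕ :=
  sInf {k | HasCW k G}

/-- Labeled graphs constructible by NLC-width operations with labels in `Fin k`. -/
inductive NLCBuild (k : ℕ) : {V : Type} → SimpleGraph V → (V → Fin k) → Prop
  | single (a : Fin k) : NLCBuild k (⊥ : SimpleGraph PUnit) (fun _ => a)
  | join {V W : Type} {G : SimpleGraph V} {H : SimpleGraph W}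
      {labG : V → Fin k} {labH : W → Fin k} (S : Set (Fin k × Fin k)) :
      NLCBuild k G labG → NLCBuild k H labH →
      NLCBuild k (nlcJoin G H labG labH S) (Sum.elim labG labH)
  | relabel {V : Type} {G : SimpleGraph V} {lab : V → Fin k} (R : Fin k → Fin k) :
      NLCBuild k G lab → NLCBuild k G (R ∘ lab)

/-- `G` is definable by an NLC-width `k`-expression. -/
def HasNLC (k : ℕ) {V : Type} (G : SimpleGraph V) : Prop :=
  ∃ (W : Type) (H : SimpleGraph W) (lab : W → Fin k),
    NLCBuild k H lab ∧ Nonempty (G ≃g H)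

/-- The NLC-width of `G`. -/
noncomputable def nlcwidth {V : Type} (G : SimpleGraph V) : ℕ :=
  sInf {k | HasNLC k G}

/-! Complementation commutes with the NLC operations, `(G ×_S H)ᶜ = Gᶜ ×_{Sᶜ} Hᶜ`, so the
complement of a graph with a `k`-expression has one too; as complementation is an involution,
`G` and `Gᶜ` even have the same NLC-width. -/

lemma nlcJoin_compl {V W : Type} {k : ℕ} (G : SimpleGraph V) (H : SimpleGraph W)
    (labG : V → Fin k) (labH : W → Fin k) (S : Set (Fin k × Fin k)) :
    (nlcJoin G H labG labH S)ᶜ = nlcJoin Gᶜ Hᶜ labG labH Sᶜ := by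
  ext (a | a) (b | b) <;> simp [nlcJoin, compl_adj]

lemma NLCBuild.compl {k : ℕ} {V : Type} {G : SimpleGraph V} {lab : V → Fin k}
    (h : NLCBuild k G lab) : NLCBuild k Gᶜ lab := by
  induction h with
  | single a => rw [Subsingleton.elim (⊥ : SimpleGraph PUnit)ᶜ ⊥]; exact NLCBuild.single a
  | join S _ _ ihG ihH => rw [nlcJoin_compl]; exact NLCBuild.join Sᶜ ihG ihH
  | relabel R _ ih => exact NLCBuild.relabel R ih

def SimpleGraph.Iso.compl {V W : Type} {G : SimpleGraph V} {H : SimpleGraph W} (e : G ≃g H) :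
    Gᶜ ≃g Hᶜ :=
  ⟨e.toEquiv, (Embedding.complEquiv e.toEmbedding).map_rel_iff⟩

lemma HasNLC.compl {k : ℕ} {V : Type} {G : SimpleGraph V} (h : HasNLC k G) : HasNLC k Gᶜ :=
  let ⟨W, H, lab, hH, ⟨e⟩⟩ := h
  ⟨W, Hᶜ, lab, hH.compl, ⟨e.compl⟩⟩

lemma hasNLC_compl_iff {k : ℕ} {V : Type} {G : SimpleGraph V} : HasNLC k Gᶜ ↔ HasNLC k G :=
  ⟨fun h => compl_compl G ▸ h.compl, HasNLC.compl⟩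

lemma nlcwidth_compl {V : Type} (G : SimpleGraph V) : nlcwidth Gᶜ = nlcwidth G := by
  simp only [nlcwidth, hasNLC_compl_iff]

theorem nlcwidth_compl_le_general {V : Type} (G : SimpleGraph V) (k : ℕ)
    (h : nlcwidth G ≤ k) : nlcwidth Gᶜ ≤ k :=
  (nlcwidth_compl G).trans_le h

/-- If a graph has NLC-width at most `k`, then so does its edge complement. -/
theorem nlcwidth_compl_le {V : Type} [Fintype V] (G : SimpleGraph V) (k : ℕ)
    (h : nlcwidth G ≤ k) : nlcwidth Gᶜ ≤ k :=
  nlcwidth_compl_le_general G k h
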